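/- arXiv:1512.03294 — 4 statements merged into one kernel-verified Lean document; each statement's English description precedes it below -/
import Mathlib

section
/- Let (X,T) be a topological dynamical system (X a compact metric space with metric d, T : X → X continuous). Suppose (X,T) is mean sensitive and there exists a pair (q,p) ∈ X × X which is mean proximal, where q is a transitive point and p is a periodic point. Then there exist η > 0 and a subset K ⊂ X which is a union of countably many Cantor sets such that K is a mean Li-Yorke set with modulus η; in particular, (X,T) is mean Li-Yorke chaotic. -/
open Filter Metric Set

/-- Birkhoff average of the distance between the orbits of `x` and `y`. -/
noncomputable def birkhoffAvg {X : Type*} [PseudoMetricSpace X]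
    (T : X → X) (x y : X) (N : ℕ) : ℝ :=
  (∑ k ∈ Finset.range N, dist (T^[k] x) (T^[k] y)) / N

/-- A pair `(x,y)` is mean proximal if
`liminf_{N→∞} (1/N) ∑_{k<N} d(T^k x, T^k y) = 0`. -/
def MeanProximalPair {X : Type*} [PseudoMetricSpace X] (T : X → X) (x y : X) : Prop :=
  liminf (birkhoffAvg T x y) atTop = 0

/-- `(X,T)` is mean sensitive. -/
def MeanSensitive {X : Type*} [PseudoMetricSpace X] (T : X → X) : Prop :=
  ∃ δ > (0 : ℝ), ∀ x : X, ∀ ε > (0 : ℝ), ∃ y ∈ ball x ε,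
    δ < limsup (birkhoffAvg T x y) atTop

/-- `K` is a mean Li-Yorke set with modulus `η`: every pair of distinct points of `K`
is mean proximal and has upper Birkhoff distance average at least `η`. -/
def MeanLiYorkeSetMod {X : Type*} [PseudoMetricSpace X]
    (T : X → X) (η : ℝ) (K : Set X) : Prop :=
  ∀ x ∈ K, ∀ y ∈ K, x ≠ y →
    MeanProximalPair T x y ∧ η ≤ limsup (birkhoffAvg T x y) atTop

/-- A Cantor set: a nonempty compact perfect totally disconnected subset. -/
def IsCantorSet {X : Type*} [MetricSpace X] (C : Set X) : Prop :=
  C.Nonempty ∧ IsCompact C ∧ Perfect C ∧ IsTotallyDisconnected C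

/-!
Let `t` be the period of `p`. The orbit of `q` splits into the `t` classes
`{T^m q : m ≡ i mod t}`, so by Baire category one class `D` is dense in a nonempty open set `U`.
Two points of `D` shadow the same point of the orbit of `p` whenever `q` shadows `p`, hence every
pair of points of `D` is mean proximal. Mean sensitivity makes the pairs whose average distance
exceeds `η = δ / 2` at arbitrarily late times dense in `X × X`. Therefore, for each `n`, the open
set of pairs whose average distance is `< 1 / (n + 1)` at some time `≥ n` and `> η` at some time
`≥ n` is dense in `U × U`, and a Mycielski-type Cantor scheme inside `U` yields a Cantor set all
of whose pairs of distinct points lie in all but finitely many of these sets.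
-/

section BirkhoffAvg

variable {X : Type*} [PseudoMetricSpace X] (T : X → X)

theorem birkhoffAvg_nonneg (x y : X) (N : ℕ) : 0 ≤ birkhoffAvg T x y N :=
  div_nonneg (Finset.sum_nonneg fun _ _ => dist_nonneg) N.cast_nonneg

@[simp]
theorem birkhoffAvg_self (x : X) (N : ℕ) : birkhoffAvg T x x N = 0 := by
  simp [birkhoffAvg]

theorem birkhoffAvg_comm (x y : X) (N : ℕ) : birkhoffAvg T x y N = birkhoffAvg T y x N := by
  simp only [birkhoffAvg, dist_comm]

theorem birkhoffAvg_triangle (x y z : X) (N : ℕ) :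
    birkhoffAvg T x z N ≤ birkhoffAvg T x y N + birkhoffAvg T y z N := by
  rw [birkhoffAvg, birkhoffAvg, birkhoffAvg, ← add_div, ← Finset.sum_add_distrib]
  gcongr with k
  exact dist_triangle _ _ _

theorem natCast_mul_birkhoffAvg (x y : X) (N : ℕ) :
    N * birkhoffAvg T x y N = ∑ k ∈ Finset.range N, dist (T^[k] x) (T^[k] y) := by
  rcases N.eq_zero_or_pos with rfl | hN
  · simp
  · exact mul_div_cancel₀ _ (by positivity)

theorem birkhoffAvg_le_diam [BoundedSpace X] (x y : X) (N : ℕ) :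
    birkhoffAvg T x y N ≤ diam (univ : Set X) := by
  refine div_le_of_le_mul₀ N.cast_nonneg diam_nonneg ?_
  calc ∑ k ∈ Finset.range N, dist (T^[k] x) (T^[k] y)
      ≤ ∑ _k ∈ Finset.range N, diam (univ : Set X) := Finset.sum_le_sum fun _ _ =>
        dist_le_diam_of_mem (Bornology.isBounded_univ.2 ‹_›) (mem_univ _) (mem_univ _)
    _ = diam (univ : Set X) * N := by simp [mul_comm]

variable {T}

theorem continuous_birkhoffAvg (hT : Continuous T) (N : ℕ) :
    Continuous fun z : X × X => birkhoffAvg T z.1 z.2 N :=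
  (continuous_finsetSum _ fun k _ =>
    ((hT.iterate k).comp continuous_fst).dist ((hT.iterate k).comp continuous_snd)).div_const _

theorem meanProximalPair_iff [BoundedSpace X] {x y : X} :
    MeanProximalPair T x y ↔ ∀ ε > 0, ∃ᶠ N in atTop, birkhoffAvg T x y N < ε := by
  have hle : IsBoundedUnder (· ≤ ·) atTop (birkhoffAvg T x y) :=
    isBoundedUnder_of ⟨_, birkhoffAvg_le_diam T x y⟩
  have hge : IsBoundedUnder (· ≥ ·) atTop (birkhoffAvg T x y) :=
    isBoundedUnder_of ⟨0, birkhoffAvg_nonneg T x y⟩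
  have h0 : 0 ≤ liminf (birkhoffAvg T x y) atTop :=
    le_liminf_of_le hle.isCoboundedUnder_ge (.of_forall (birkhoffAvg_nonneg T x y))
  refine ⟨fun h ε hε => frequently_lt_of_liminf_lt hle.isCoboundedUnder_ge (h ▸ hε),
    fun h => le_antisymm (le_of_forall_pos_le_add fun ε hε => ?_) h0⟩
  simpa using liminf_le_of_frequently_le ((h ε hε).mono fun _ => le_of_lt) hge

theorem le_limsup_birkhoffAvg [BoundedSpace X] {x y : X} {η : ℝ}
    (h : ∃ᶠ N in atTop, η < birkhoffAvg T x y N) : η ≤ limsup (birkhoffAvg T x y) atTop :=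
  le_limsup_of_frequently_le (h.mono fun _ => le_of_lt)
    (isBoundedUnder_of ⟨_, birkhoffAvg_le_diam T x y⟩)

theorem MeanSensitive.exists_forall_dense_lt_birkhoffAvg (h : MeanSensitive T) :
    ∃ η > 0, ∀ n : ℕ, Dense {z : X × X | ∃ N ≥ n, η < birkhoffAvg T z.1 z.2 N} := by
  obtain ⟨δ, hδ, hsens⟩ := h
  refine ⟨δ / 2, half_pos hδ, fun n => Metric.dense_iff.2 fun ⟨x, y⟩ r hr => ?_⟩
  obtain ⟨x', hx', hlim⟩ := hsens x r hr
  obtain ⟨N, hN, hδN⟩ := frequently_atTop.1 (frequently_lt_of_lt_limsup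
    (isCoboundedUnder_le_of_le atTop (birkhoffAvg_nonneg T x x')) hlim) n
  -- the orbit of `y` stays on average `δ / 2` away from that of `x` or from that of `x'`
  have htri := birkhoffAvg_triangle T x y x' N
  rw [birkhoffAvg_comm T y] at htri
  by_cases hxy : δ / 2 < birkhoffAvg T x y N
  · exact ⟨(x, y), mem_ball_self hr, N, hN, hxy⟩
  · refine ⟨(x', y), ?_, N, hN, by linarith⟩
    simpa [Prod.dist_eq] using hx'

end BirkhoffAvg

theorem sum_range_shift_le {a : ℕ → ℝ} (ha : ∀ k, 0 ≤ a k) {α B : ℕ} (h : α ≤ B) (N : ℕ) :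
    ∑ k ∈ Finset.range N, a (α + k) ≤ ∑ k ∈ Finset.range (B + N), a k :=
  calc ∑ k ∈ Finset.range N, a (α + k)
      ≤ ∑ k ∈ Finset.range (α + N), a k := by
        rw [Finset.sum_range_add]
        exact le_add_of_nonneg_left (Finset.sum_nonneg fun k _ => ha k)
    _ ≤ ∑ k ∈ Finset.range (B + N), a k :=
        Finset.sum_le_sum_of_subset_of_nonneg (Finset.range_subset_range.2 (by omega))
          fun k _ _ => ha k

section Shadowing

variable {X : Type*} [PseudoMetricSpace X] {T : X → X} {q p : X} {α β : ℕ}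

-- Triangle inequality through the common point `T^[α + k] p = T^[β + k] p`.
theorem natCast_mul_birkhoffAvg_iterate_le (hαβ : T^[α] p = T^[β] p) {B : ℕ} (hα : α ≤ B)
    (hβ : β ≤ B) (N : ℕ) :
    N * birkhoffAvg T (T^[α] q) (T^[β] q) N ≤ 2 * ((B + N : ℕ) * birkhoffAvg T q p (B + N)) := by
  rw [natCast_mul_birkhoffAvg, natCast_mul_birkhoffAvg]
  set a : ℕ → ℝ := fun k => dist (T^[k] q) (T^[k] p)
  have hpt (k : ℕ) : dist (T^[k] (T^[α] q)) (T^[k] (T^[β] q)) ≤ a (α + k) + a (β + k) := by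
    have hp : T^[α + k] p = T^[β + k] p := by
      rw [add_comm α, add_comm β, Function.iterate_add_apply, Function.iterate_add_apply, hαβ]
    simp only [a, ← Function.iterate_add_apply, add_comm k, hp]
    exact dist_triangle_right _ _ _
  calc ∑ k ∈ Finset.range N, dist (T^[k] (T^[α] q)) (T^[k] (T^[β] q))
      ≤ ∑ k ∈ Finset.range N, a (α + k) + ∑ k ∈ Finset.range N, a (β + k) := by
        rw [← Finset.sum_add_distrib]
        exact Finset.sum_le_sum fun k _ => hpt k
    _ ≤ 2 * ∑ k ∈ Finset.range (B + N), a k := by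
        linarith [sum_range_shift_le (a := a) (fun _ => dist_nonneg) hα N,
          sum_range_shift_le (a := a) (fun _ => dist_nonneg) hβ N]

theorem frequently_birkhoffAvg_iterate_lt
    (hqp : ∀ ε > 0, ∃ᶠ M in atTop, birkhoffAvg T q p M < ε) (hαβ : T^[α] p = T^[β] p) :
    ∀ ε > 0, ∃ᶠ N in atTop, birkhoffAvg T (T^[α] q) (T^[β] q) N < ε := by
  intro ε hε
  refine frequently_atTop.2 fun m => ?_
  set B := max α β
  obtain ⟨M, hM, hMε⟩ := frequently_atTop.1 (hqp (ε / 4) (by positivity)) (2 * B + m + 1)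
  obtain ⟨N, rfl⟩ : ∃ N, M = B + N := ⟨M - B, by omega⟩
  have hN : (0 : ℝ) < N := by exact_mod_cast (show 0 < N by omega)
  have hBN : (B : ℝ) ≤ N := by exact_mod_cast (show B ≤ N by omega)
  have key := natCast_mul_birkhoffAvg_iterate_le (q := q) hαβ (le_max_left α β) (le_max_right α β) N
  rw [Nat.cast_add] at key
  refine ⟨N, by omega, lt_of_mul_lt_mul_left (a := (N : ℝ)) ?_ hN.le⟩
  calc (N : ℝ) * birkhoffAvg T (T^[α] q) (T^[β] q) N
      ≤ 2 * ((B + N) * birkhoffAvg T q p (B + N)) := key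
    _ < 2 * ((B + N) * (ε / 4)) := by gcongr
    _ ≤ N * ε := by nlinarith

end Shadowing

theorem exists_nonempty_interior_closure_iterate_mod {X : Type*} [TopologicalSpace X]
    [BaireSpace X] {T : X → X} {q : X} (hq : Dense (range fun n : ℕ => T^[n] q)) {t : ℕ}
    (ht : 0 < t) : ∃ i, (interior (closure ((T^[·] q) '' {m | m % t = i}))).Nonempty := by
  have : Nonempty X := ⟨q⟩
  have hcover : ⋃ i : Fin t, closure ((T^[·] q) '' {m | m % t = i}) = univ := by
    rw [← closure_iUnion_of_finite, ← dense_iff_closure_eq]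
    refine hq.mono ?_
    rintro - ⟨m, rfl⟩
    exact mem_iUnion.2 ⟨⟨m % t, Nat.mod_lt m ht⟩, m, rfl, rfl⟩
  obtain ⟨i, hi⟩ := nonempty_interior_of_iUnion_of_closed (fun _ => isClosed_closure) hcover
  exact ⟨i, hi⟩

section Mycielski

open TopologicalSpace

variable {X : Type*}

theorem exists_prod_subset_of_subset_closure [TopologicalSpace X] {U : Set X}
    {W : Set (X × X)} (hW : IsOpen W) (hUW : U ×ˢ U ⊆ closure W) {A B : Opens X}
    (hA : (A : Set X).Nonempty) (hB : (B : Set X).Nonempty) (hAU : (A : Set X) ⊆ U)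
    (hBU : (B : Set X) ⊆ U) :
    ∃ A' B' : Opens X, A' ≤ A ∧ B' ≤ B ∧ (A' : Set X).Nonempty ∧ (B' : Set X).Nonempty ∧
      (A' : Set X) ×ˢ (B' : Set X) ⊆ W := by
  have hAB : IsOpen ((A : Set X) ×ˢ (B : Set X)) := A.isOpen.prod B.isOpen
  obtain ⟨⟨a, b⟩, hab, ha, hb⟩ : (W ∩ (A : Set X) ×ˢ (B : Set X)).Nonempty := by
    rw [← closure_inter_open_nonempty_iff hAB,
      inter_eq_right.2 ((prod_mono hAU hBU).trans hUW)]
    exact hA.prod hB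
  obtain ⟨u, v, hu, hv, hau, hbv, huv⟩ := isOpen_prod_iff.1 (hW.inter hAB) a b ⟨hab, ha, hb⟩
  refine ⟨⟨u ∩ A, hu.inter A.isOpen⟩, ⟨v ∩ B, hv.inter B.isOpen⟩, fun _ => And.right,
    fun _ => And.right, ⟨a, hau, ha⟩, ⟨b, hbv, hb⟩, ?_⟩
  exact (prod_mono inter_subset_left inter_subset_left).trans (huv.trans inter_subset_left)

theorem exists_pairwise_prod_subset [TopologicalSpace X] {ι : Type*} [Finite ι] {U : Set X}
    {W : Set (X × X)} (hW : IsOpen W) (hUW : U ×ˢ U ⊆ closure W) {V : ι → Opens X}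
    (hV : ∀ i, (V i : Set X).Nonempty) (hVU : ∀ i, (V i : Set X) ⊆ U) :
    ∃ V' ≤ V, (∀ i, (V' i : Set X).Nonempty) ∧
      Pairwise fun i j => (V' i : Set X) ×ˢ (V' j : Set X) ⊆ W := by
  classical
  have := Fintype.ofFinite ι
  suffices ∀ s : Finset (ι × ι), ∃ V' ≤ V, (∀ i, (V' i : Set X).Nonempty) ∧
      ∀ p ∈ s, p.1 ≠ p.2 → (V' p.1 : Set X) ×ˢ (V' p.2 : Set X) ⊆ W by
    obtain ⟨V', hle, hne, h⟩ := this Finset.univ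
    exact ⟨V', hle, hne, fun i j hij => h (i, j) (Finset.mem_univ _) hij⟩
  intro s
  induction s using Finset.induction_on with
  | empty => exact ⟨V, le_rfl, hV, by simp⟩
  | insert p s _ ih =>
    obtain ⟨V', hle, hne, hs⟩ := ih
    by_cases hp : p.1 = p.2
    · refine ⟨V', hle, hne, fun r hr hr12 => ?_⟩
      rcases Finset.mem_insert.1 hr with rfl | hr
      · exact absurd hp hr12
      · exact hs r hr hr12
    obtain ⟨A, B, hA, hB, hAne, hBne, hAB⟩ := exists_prod_subset_of_subset_closure hW hUW
      (hne p.1) (hne p.2) ((SetLike.coe_subset_coe.2 (hle _)).trans (hVU _))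
      ((SetLike.coe_subset_coe.2 (hle _)).trans (hVU _))
    set V'' := Function.update (Function.update V' p.1 A) p.2 B
    have hV'' : ∀ i, V'' i ≤ V' i ∧ (V'' i : Set X).Nonempty := by
      intro i
      simp only [V'', Function.update_apply]
      split_ifs with h₂ h₁
      · exact h₂ ▸ ⟨hB, hBne⟩
      · exact h₁ ▸ ⟨hA, hAne⟩
      · exact ⟨le_rfl, hne i⟩
    refine ⟨V'', fun i => (hV'' i).1.trans (hle i), fun i => (hV'' i).2, fun r hr hr12 => ?_⟩
    rcases Finset.mem_insert.1 hr with rfl | hr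
    · simpa [V'', Function.update_of_ne hp] using hAB
    · exact (prod_mono (hV'' _).1 (hV'' _).1).trans (hs r hr hr12)

theorem TopologicalSpace.Opens.exists_closure_subset_ediam_le [PseudoMetricSpace X]
    {V : Opens X} (hV : (V : Set X).Nonempty) {ε : ℝ} (hε : 0 < ε) :
    ∃ V' : Opens X, (V' : Set X).Nonempty ∧ closure (V' : Set X) ⊆ V ∧
      ediam (V' : Set X) ≤ ENNReal.ofReal ε := by
  obtain ⟨x, hx⟩ := hV
  obtain ⟨r, hr, hrV⟩ := Metric.isOpen_iff.1 V.isOpen x hx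
  set s := min (r / 2) (ε / 2)
  have hs : 0 < s := by positivity
  refine ⟨⟨ball x s, isOpen_ball⟩, ⟨x, mem_ball_self hs⟩, ?_, ?_⟩
  · exact closure_ball_subset_closedBall.trans
      ((closedBall_subset_ball (by linarith [min_le_left (r / 2) (ε / 2)])).trans hrV)
  · refine ediam_le_of_forall_dist_le fun y hy z hz => ?_
    linarith [dist_triangle_right y z x, (mem_ball.1 hy : dist y x < s),
      (mem_ball.1 hz : dist z x < s), min_le_right (r / 2) (ε / 2)]

-- Words are read as in `PiNat.res`, newest letter first, so the parent of `v` is `v.tail`.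
theorem exists_cantorScheme_refinement [PseudoMetricSpace X] {U : Set X} {W : Set (X × X)} (hW : IsOpen W)
    (hUW : U ×ˢ U ⊆ closure W) {n : ℕ} {V : List.Vector Bool n → Opens X}
    (hV : ∀ v, (V v : Set X).Nonempty) (hVU : ∀ v, (V v : Set X) ⊆ U) {ε : ℝ} (hε : 0 < ε) :
    ∃ V' : List.Vector Bool (n + 1) → Opens X,
      (∀ v, (V' v : Set X).Nonempty ∧ closure (V' v : Set X) ⊆ V v.tail ∧
        ediam (V' v : Set X) ≤ ENNReal.ofReal ε) ∧
      Pairwise fun v w => (V' v : Set X) ×ˢ (V' w : Set X) ⊆ W := by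
  obtain ⟨V₁, hle, hne, hpair⟩ :=
    exists_pairwise_prod_subset hW hUW (V := fun v : List.Vector Bool (n + 1) => V v.tail)
      (fun _ => hV _) (fun _ => hVU _)
  choose V' hV' using fun v => Opens.exists_closure_subset_ediam_le (hne v) hε
  refine ⟨V', fun v => ⟨(hV' v).1, (hV' v).2.1.trans (hle v), (hV' v).2.2⟩, fun v w hvw => ?_⟩
  exact (prod_mono (subset_closure.trans (hV' v).2.1) (subset_closure.trans (hV' w).2.1)).trans
    (hpair hvw)

theorem exists_cantorScheme_prod_subset [PseudoMetricSpace X] {U : Set X} (hU : IsOpen U)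
    (hUne : U.Nonempty) {W : ℕ → Set (X × X)} (hW : ∀ n, IsOpen (W n))
    (hUW : ∀ n, U ×ˢ U ⊆ closure (W n)) :
    ∃ A : List Bool → Set X, CantorScheme.ClosureAntitone A ∧ CantorScheme.VanishingDiam A ∧
      (∀ l, (A l).Nonempty) ∧
      ∀ n (v w : List.Vector Bool (n + 1)), v ≠ w → A v.1 ×ˢ A w.1 ⊆ W n := by
  let Stage (n : ℕ) :=
    {V : List.Vector Bool n → Opens X // ∀ v, (V v : Set X).Nonempty ∧ (V v : Set X) ⊆ U}
  have hnext (n : ℕ) (V : Stage n) : ∃ V' : Stage (n + 1),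
      (∀ v, closure (V'.1 v : Set X) ⊆ V.1 v.tail ∧
        ediam (V'.1 v : Set X) ≤ ENNReal.ofReal (1 / (n + 1))) ∧
      Pairwise fun v w => (V'.1 v : Set X) ×ˢ (V'.1 w : Set X) ⊆ W n := by
    obtain ⟨V', hV', hpair⟩ := exists_cantorScheme_refinement (hW n) (hUW n) (fun v => (V.2 v).1)
      (fun v => (V.2 v).2) (ε := 1 / (n + 1)) (by positivity)
    exact ⟨⟨V', fun v => ⟨(hV' v).1, subset_closure.trans ((hV' v).2.1.trans (V.2 _).2)⟩⟩,
      fun v => (hV' v).2, hpair⟩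
  choose next hnext using hnext
  let stage (n : ℕ) : Stage n := Nat.rec ⟨fun _ => ⟨U, hU⟩, fun _ => ⟨hUne, subset_rfl⟩⟩ next n
  let A (l : List Bool) : Set X := (stage l.length).1 ⟨l, rfl⟩
  have hA (n : ℕ) (v : List.Vector Bool n) : A v.1 = (stage n).1 v := by
    obtain ⟨l, rfl⟩ := v
    rfl
  refine ⟨A, fun l a => ((hnext l.length (stage l.length)).1 ⟨a :: l, rfl⟩).1, fun σ => ?_,
    fun l => ((stage _).2 _).1, fun n v w hvw => ?_⟩
  · rw [← tendsto_add_atTop_iff_nat 1]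
    refine tendsto_of_tendsto_of_tendsto_of_le_of_le tendsto_const_nhds
      (ENNReal.ofReal_zero ▸ ENNReal.tendsto_ofReal tendsto_one_div_add_atTop_nhds_zero_nat)
      (fun _ => zero_le) fun n => ?_
    rw [show A (PiNat.res σ (n + 1)) = _ from hA (n + 1) ⟨_, PiNat.res_length σ (n + 1)⟩]
    exact ((hnext n (stage n)).1 _).2
  · rw [hA, hA]
    exact (hnext n (stage n)).2 hvw

theorem exists_nat_bool_injection_eventually_mem [PseudoMetricSpace X] [CompleteSpace X]
    {U : Set X} (hU : IsOpen U) (hUne : U.Nonempty) {W : ℕ → Set (X × X)}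
    (hW : ∀ n, IsOpen (W n)) (hUW : ∀ n, U ×ˢ U ⊆ closure (W n)) (hirr : ∀ n x, (x, x) ∉ W n) :
    ∃ f : (ℕ → Bool) → X, Continuous f ∧ Function.Injective f ∧
      ∀ σ τ, σ ≠ τ → ∀ᶠ n in atTop, (f σ, f τ) ∈ W n := by
  obtain ⟨A, hanti, hdiam, hne, hprod⟩ := exists_cantorScheme_prod_subset hU hUne hW hUW
  have hdom := hanti.map_of_vanishingDiam hdiam hne
  set f : (ℕ → Bool) → X := fun σ => (CantorScheme.inducedMap A).2 ⟨σ, hdom ▸ mem_univ σ⟩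
  have hf (σ τ : ℕ → Bool) (hστ : σ ≠ τ) : ∀ᶠ n in atTop, (f σ, f τ) ∈ W n := by
    obtain ⟨j, hj⟩ := Function.ne_iff.1 hστ
    filter_upwards [eventually_ge_atTop j] with n hn
    refine hprod n ⟨_, PiNat.res_length σ (n + 1)⟩ ⟨_, PiNat.res_length τ (n + 1)⟩ (fun h => ?_)
      ⟨CantorScheme.map_mem _ _, CantorScheme.map_mem _ _⟩
    exact hj (PiNat.res_eq_res.1 (congrArg Subtype.val h) (Nat.lt_succ_of_le hn))
  refine ⟨f, hdiam.map_continuous.comp (by fun_prop), fun σ τ h => by_contra fun hστ => ?_, hf⟩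
  obtain ⟨n, hn⟩ := (hf σ τ hστ).exists
  exact hirr n _ (h ▸ hn)

end Mycielski

theorem isCantorSet_range {X : Type*} [MetricSpace X] {f : (ℕ → Bool) → X} (hf : Continuous f)
    (hinj : Function.Injective f) : IsCantorSet (range f) := by
  have hK : IsCompact (range f) := isCompact_range hf
  refine ⟨range_nonempty f, hK, ⟨hK.isClosed, preperfect_iff_nhds.2 ?_⟩,
    (hf.isClosedEmbedding hinj).isTotallyDisconnected_range.2 inferInstance⟩
  rintro - ⟨σ, rfl⟩ V hV
  have hflip : Tendsto (fun k => Function.update σ k (!σ k)) atTop (nhds σ) :=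
    tendsto_pi_nhds.2 fun j => tendsto_const_nhds.congr'
      ((eventually_gt_atTop j).mono fun k hk => (Function.update_of_ne hk.ne _ _).symm)
  obtain ⟨k, hk⟩ := (((hf.tendsto σ).comp hflip).eventually_mem hV).exists
  refine ⟨_, ⟨hk, mem_range_self _⟩, fun h => ?_⟩
  simpa using congrFun (hinj h) k

theorem not_countable_range_of_injective {X : Type*} {f : (ℕ → Bool) → X}
    (hinj : Function.Injective f) : ¬ (range f).Countable := by
  intro h
  have : Countable (ℕ → Bool) := countable_univ_iff.1 (preimage_range f ▸ h.preimage hinj)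
  rw [← Cardinal.mk_le_aleph0_iff] at this
  exact this.not_gt (by simpa using Cardinal.cantor Cardinal.aleph0)

section MeanLiYorke

variable {X : Type*} {T : X → X}

theorem meanProximalPair_and_le_limsup_of_eventually [PseudoMetricSpace X] [BoundedSpace X]
    {x y : X} {η : ℝ}
    (h : ∀ᶠ n : ℕ in atTop, (∃ N ≥ n, birkhoffAvg T x y N < 1 / (n + 1)) ∧
      ∃ N ≥ n, η < birkhoffAvg T x y N) :
    MeanProximalPair T x y ∧ η ≤ limsup (birkhoffAvg T x y) atTop := by
  constructor
  · refine meanProximalPair_iff.2 fun ε hε => frequently_atTop.2 fun m => ?_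
    obtain ⟨n, ⟨⟨N, hN, hNε⟩, -⟩, hmn, hn⟩ := (h.and ((eventually_ge_atTop m).and
      ((tendsto_order.1 tendsto_one_div_add_atTop_nhds_zero_nat).2 ε hε))).exists
    exact ⟨N, hmn.trans hN, hNε.trans hn⟩
  · refine le_limsup_birkhoffAvg (frequently_atTop.2 fun m => ?_)
    obtain ⟨n, ⟨-, N, hN, hNη⟩, hmn⟩ := (h.and (eventually_ge_atTop m)).exists
    exact ⟨N, hmn.trans hN, hNη⟩

theorem exists_nat_bool_injection_meanLiYorkeSetMod [MetricSpace X] [CompactSpace X]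
    (hT : Continuous T) {η : ℝ} (hη : 0 < η)
    (hdense : ∀ n : ℕ, Dense {z : X × X | ∃ N ≥ n, η < birkhoffAvg T z.1 z.2 N}) {D : Set X}
    (hD : (interior (closure D)).Nonempty)
    (hprox : ∀ x ∈ D, ∀ y ∈ D, ∀ ε > 0, ∃ᶠ N in atTop, birkhoffAvg T x y N < ε) :
    ∃ f : (ℕ → Bool) → X, Continuous f ∧ Function.Injective f ∧
      MeanLiYorkeSetMod T η (range f) := by
  set P : ℕ → Set (X × X) := fun n => {z | ∃ N ≥ n, birkhoffAvg T z.1 z.2 N < 1 / (n + 1)}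
  set S : ℕ → Set (X × X) := fun n => {z | ∃ N ≥ n, η < birkhoffAvg T z.1 z.2 N}
  have hcont (N : ℕ) := continuous_birkhoffAvg hT N
  have hopen (n : ℕ) : IsOpen (P n) ∧ IsOpen (S n) :=
    ⟨isOpen_iff_forall_mem_open.2 fun _ ⟨N, hN, hz⟩ =>
      ⟨{w | birkhoffAvg T w.1 w.2 N < 1 / (n + 1)}, fun _ hw => ⟨N, hN, hw⟩,
        isOpen_lt (hcont N) continuous_const, hz⟩,
    isOpen_iff_forall_mem_open.2 fun _ ⟨N, hN, hz⟩ =>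
      ⟨{w | η < birkhoffAvg T w.1 w.2 N}, fun _ hw => ⟨N, hN, hw⟩,
        isOpen_lt continuous_const (hcont N), hz⟩⟩
  have hDP (n : ℕ) : D ×ˢ D ⊆ P n := fun z ⟨hz₁, hz₂⟩ =>
    frequently_atTop.1 (hprox _ hz₁ _ hz₂ _ (by positivity)) n
  have hUW (n : ℕ) : interior (closure D) ×ˢ interior (closure D) ⊆ closure (P n ∩ S n) :=
    calc interior (closure D) ×ˢ interior (closure D)
        ⊆ closure (D ×ˢ D) := by
          rw [closure_prod_eq]; exact prod_mono interior_subset interior_subset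
      _ ⊆ closure (P n ∩ S n) := closure_minimal
          ((hDP n).trans ((hdense n).open_subset_closure_inter (hopen n).1)) isClosed_closure
  obtain ⟨f, hf, hinj, hfW⟩ := exists_nat_bool_injection_eventually_mem isOpen_interior hD
    (fun n => (hopen n).1.inter (hopen n).2) hUW
    fun n x ⟨_, N, _, hN⟩ => lt_asymm hη (birkhoffAvg_self T x N ▸ hN)
  refine ⟨f, hf, hinj, ?_⟩
  rintro - ⟨σ, rfl⟩ - ⟨τ, rfl⟩ hne
  exact meanProximalPair_and_le_limsup_of_eventually (hfW σ τ (ne_of_apply_ne f hne))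

end MeanLiYorke

/-- If a TDS is mean sensitive and there is a mean proximal pair consisting of a
transitive point `q` and a periodic point `p`, then there are `η > 0` and a set `K`,
a union of countably many Cantor sets, which is a mean Li-Yorke set with modulus `η`;
in particular `K` is uncountable, so `(X,T)` is mean Li-Yorke chaotic. -/
theorem mean_LiYorke_chaos_of_meanSensitive_of_transitive_periodic_meanProximal
    {X : Type*} [MetricSpace X] [CompactSpace X] (T : X → X) (hT : Continuous T)
    (hsens : MeanSensitive T) (q p : X)
    (hq : Dense (Set.range fun n : ℕ => T^[n] q))
    (hp : ∃ t : ℕ, 1 ≤ t ∧ T^[t] p = p ∧ ∀ i : ℕ, 1 ≤ i → i < t → T^[i] p ≠ p)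
    (hqp : MeanProximalPair T q p) :
    ∃ η > (0 : ℝ), ∃ K : Set X,
      (∃ C : ℕ → Set X, (∀ n, IsCantorSet (C n)) ∧ K = ⋃ n, C n) ∧
      MeanLiYorkeSetMod T η K ∧ ¬ K.Countable := by
  obtain ⟨η, hη, hdense⟩ := hsens.exists_forall_dense_lt_birkhoffAvg
  obtain ⟨t, ht, htp, -⟩ := hp
  obtain ⟨i, hD⟩ := exists_nonempty_interior_closure_iterate_mod hq ht
  have hprox : ∀ x ∈ (T^[·] q) '' {m | m % t = i}, ∀ y ∈ (T^[·] q) '' {m | m % t = i},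
      ∀ ε > 0, ∃ᶠ N in atTop, birkhoffAvg T x y N < ε := by
    rintro - ⟨m₁, hm₁, rfl⟩ - ⟨m₂, hm₂, rfl⟩
    refine frequently_birkhoffAvg_iterate_lt (meanProximalPair_iff.1 hqp) ?_
    have hper : Function.IsPeriodicPt T t p := htp
    rw [← hper.iterate_mod_apply m₁, ← hper.iterate_mod_apply m₂, hm₁, hm₂]
  obtain ⟨f, hf, hinj, hLY⟩ := exists_nat_bool_injection_meanLiYorkeSetMod hT hη hdense hD hprox
  exact ⟨η, hη, range f, ⟨fun _ => range f, fun _ => isCantorSet_range hf hinj,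
    (iUnion_const _).symm⟩, hLY, not_countable_range_of_injective hinj⟩
end

section
/- Let (X,T) be a TDS and let A be a Borel subset of X such that every pair (x,y) ∈ A × A is mean proximal. Then for every non-atomic T-invariant Borel probability measure μ on X, one has μ(A) = 0. -/
open Filter Metric Set MeasureTheory

/-!
Pass to the product system `(X × X, T × T, μ ⊗ μ)`. Garsia's maximal ergodic inequality shows
that on the invariant set where the Birkhoff averages of a bounded nonnegative function `g` have
liminf `0`, the integral of `g` is at most `ε` for every `ε > 0`; hence `g` vanishes a.e. there.
For `g (x, y) = dist x y` this says that almost every mean proximal pair lies on the diagonal,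
which is `μ ⊗ μ`-null because `μ` has no atoms. As `A ×ˢ A` consists of mean proximal pairs,
`μ A * μ A = 0`.
-/

open scoped Topology

section MaximalErgodic

variable {α : Type*} {f : α → α} {g : α → ℝ}

/-- The largest of the Birkhoff sums `birkhoffSum f g k`, `1 ≤ k ≤ n + 1` (the empty sum `k = 0`
is not among them). -/
def birkhoffMax (f : α → α) (g : α → ℝ) (n : ℕ) : α → ℝ :=
  partialSups (fun k ↦ birkhoffSum f g (k + 1)) n

lemma birkhoffSum_le_birkhoffMax {k n : ℕ} (hk : k ≤ n) (x : α) :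
    birkhoffSum f g (k + 1) x ≤ birkhoffMax f g n x :=
  le_partialSups_of_le (fun k ↦ birkhoffSum f g (k + 1)) hk x

lemma birkhoffMax_mono {m n : ℕ} (hmn : m ≤ n) (x : α) :
    birkhoffMax f g m x ≤ birkhoffMax f g n x :=
  (partialSups fun k ↦ birkhoffSum f g (k + 1)).monotone hmn x

lemma birkhoffMax_le_add_max_zero (n : ℕ) (x : α) :
    birkhoffMax f g n x ≤ g x + max (birkhoffMax f g n (f x)) 0 := by
  refine partialSups_le _ n (fun x ↦ g x + max (birkhoffMax f g n (f x)) 0) (fun m hm x ↦ ?_) x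
  show birkhoffSum f g (m + 1) x ≤ g x + max (birkhoffMax f g n (f x)) 0
  rw [birkhoffSum_succ']
  gcongr g x + ?_
  rcases m with _ | m
  · simp
  · exact (birkhoffSum_le_birkhoffMax (by omega) _).trans (le_max_left _ _)

variable [MeasurableSpace α] {μ : Measure α}

lemma MeasureTheory.MeasurePreserving.integrable_birkhoffSum (hf : MeasurePreserving f μ μ)
    (hg : Integrable g μ) (n : ℕ) : Integrable (birkhoffSum f g n) μ := by
  unfold birkhoffSum
  exact integrable_finsetSum _ fun k _ ↦ (hf.iterate k).integrable_comp_of_integrable hg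

lemma MeasureTheory.MeasurePreserving.integrable_birkhoffMax (hf : MeasurePreserving f μ μ)
    (hg : Integrable g μ) (n : ℕ) : Integrable (birkhoffMax f g n) μ := by
  induction n with
  | zero => simpa [birkhoffMax] using hf.integrable_birkhoffSum hg 1
  | succ n ih =>
    rw [birkhoffMax, ← Order.succ_eq_add_one, partialSups_succ]
    exact ih.sup (hf.integrable_birkhoffSum hg _)

/-- The maximal ergodic theorem, in Garsia's form. -/
theorem MeasureTheory.MeasurePreserving.setIntegral_birkhoffMax_pos_nonneg
    (hf : MeasurePreserving f μ μ) (hg : Integrable g μ) (n : ℕ) :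
    0 ≤ ∫ x in {x | 0 < birkhoffMax f g n x}, g x ∂μ := by
  set M := birkhoffMax f g n
  set s := {x | 0 < M x}
  have hM : Integrable M μ := hf.integrable_birkhoffMax hg n
  have hM_pos : Integrable (fun x ↦ max (M x) 0) μ := hM.pos_part
  have hM_pos_f : Integrable (fun x ↦ max (M (f x)) 0) μ :=
    hf.integrable_comp_of_integrable hM_pos
  have hs : NullMeasurableSet s μ := nullMeasurableSet_lt aemeasurable_const hM.aemeasurable
  have h_comp : ∫ x, max (M (f x)) 0 ∂μ = ∫ x, max (M x) 0 ∂μ := by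
    have := integral_map hf.aemeasurable (hf.map_eq ▸ hM_pos.aestronglyMeasurable)
    rwa [hf.map_eq, eq_comm] at this
  have h_on_s : ∫ x in s, M x ∂μ = ∫ x, max (M x) 0 ∂μ := by
    rw [setIntegral_congr_fun₀ hs fun x hx ↦ (max_eq_left (le_of_lt hx)).symm]
    exact setIntegral_eq_integral_of_forall_compl_eq_zero fun x hx ↦ max_eq_right (not_lt.1 hx)
  calc 0 = ∫ x, max (M x) 0 ∂μ - ∫ x, max (M (f x)) 0 ∂μ := by rw [h_comp, sub_self]
    _ ≤ ∫ x in s, M x ∂μ - ∫ x in s, max (M (f x)) 0 ∂μ := by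
      rw [h_on_s]
      exact sub_le_sub_left
        (setIntegral_le_integral hM_pos_f (Eventually.of_forall fun _ ↦ le_max_right _ _)) _
    _ = ∫ x in s, (M x - max (M (f x)) 0) ∂μ :=
      (integral_sub hM.integrableOn hM_pos_f.integrableOn).symm
    _ ≤ ∫ x in s, g x ∂μ :=
      setIntegral_mono (hM.sub hM_pos_f).integrableOn hg.integrableOn fun x ↦ by
        linarith [birkhoffMax_le_add_max_zero (f := f) (g := g) n x]

theorem MeasureTheory.MeasurePreserving.integral_nonneg_of_ae_exists_birkhoffSum_pos
    (hf : MeasurePreserving f μ μ) (hg : Integrable g μ)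
    (hpos : ∀ᵐ x ∂μ, ∃ n, 0 < birkhoffSum f g n x) : 0 ≤ ∫ x, g x ∂μ := by
  set s : ℕ → Set α := fun n ↦ {x | 0 < birkhoffMax f g n x}
  have hs : ∀ n, NullMeasurableSet (s n) μ := fun n ↦
    nullMeasurableSet_lt aemeasurable_const (hf.integrable_birkhoffMax hg n).aemeasurable
  have hs_mono : Monotone s := fun m n hmn x hx ↦ hx.trans_le (birkhoffMax_mono hmn x)
  have hs_ae : ⋃ n, s n =ᵐ[μ] univ := by
    refine ae_eq_univ.2 <| ae_iff.1 <| hpos.mono fun x ⟨n, hn⟩ ↦ ?_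
    rcases n with _ | n
    · simp at hn
    · exact mem_iUnion.2 ⟨n, hn.trans_le (birkhoffSum_le_birkhoffMax le_rfl x)⟩
  have h_lim := tendsto_setIntegral_of_monotone₀ hs hs_mono hg.integrableOn
  rw [setIntegral_congr_set hs_ae, setIntegral_univ] at h_lim
  exact ge_of_tendsto' h_lim fun n ↦ hf.setIntegral_birkhoffMax_pos_nonneg hg n

end MaximalErgodic

lemma Filter.liminf_add_of_tendsto_zero {ι : Type*} {l : Filter ι} [l.NeBot] {u v : ι → ℝ}
    (hu_le : IsBoundedUnder (· ≤ ·) l u) (hu_ge : IsBoundedUnder (· ≥ ·) l u)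
    (hv : Tendsto v l (𝓝 0)) : liminf (u + v) l = liminf u l := by
  apply le_antisymm
  · calc liminf (u + v) l = liminf (v + u) l := by rw [add_comm]
      _ ≤ limsup v l + liminf u l :=
        liminf_add_le hv.isBoundedUnder_ge hv.isBoundedUnder_le hu_ge hu_le.isCoboundedUnder_ge
      _ = liminf u l := by rw [hv.limsup_eq, zero_add]
  · calc liminf u l = liminf u l + liminf v l := by rw [hv.liminf_eq, add_zero]
      _ ≤ liminf (u + v) l :=
        le_liminf_add hu_ge hu_le hv.isBoundedUnder_ge hv.isBoundedUnder_le.isCoboundedUnder_ge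

section BirkhoffAverage

variable {α : Type*} {f : α → α} {g : α → ℝ} {C : ℝ}

lemma abs_birkhoffAverage_le (hC : ∀ x, |g x| ≤ C) (n : ℕ) (x : α) :
    |birkhoffAverage ℝ f g n x| ≤ C := by
  rcases n.eq_zero_or_pos with rfl | hn
  · simpa using (abs_nonneg _).trans (hC x)
  rw [birkhoffAverage, smul_eq_mul, abs_mul, abs_inv, Nat.abs_cast,
    inv_mul_le_iff₀ (by positivity)]
  calc |birkhoffSum f g n x| ≤ ∑ k ∈ Finset.range n, |g (f^[k] x)| :=
        Finset.abs_sum_le_sum_abs _ _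
    _ ≤ n * C := (Finset.sum_le_sum fun k _ ↦ hC (f^[k] x)).trans_eq (by simp)

lemma liminf_birkhoffAverage_apply (hC : ∀ x, |g x| ≤ C) (x : α) :
    liminf (fun n ↦ birkhoffAverage ℝ f g n (f x)) atTop =
      liminf (fun n ↦ birkhoffAverage ℝ f g n x) atTop := by
  have h_range : Bornology.IsBounded (range g) :=
    isBounded_iff_forall_norm_le.2 ⟨C, forall_mem_range.2 hC⟩
  have h_abs := fun n ↦ abs_birkhoffAverage_le (f := f) hC n x
  rw [← liminf_add_of_tendsto_zero (isBoundedUnder_of ⟨C, fun n ↦ (abs_le.1 (h_abs n)).2⟩)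
    (isBoundedUnder_of ⟨-C, fun n ↦ (abs_le.1 (h_abs n)).1⟩)
    (tendsto_birkhoffAverage_apply_sub_birkhoffAverage' ℝ h_range f x)]
  congr 1
  ext n
  simp only [Pi.add_apply, add_sub_cancel]

variable [MeasurableSpace α] {μ : Measure α}

theorem MeasureTheory.MeasurePreserving.setIntegral_le_of_frequently_birkhoffAverage_lt
    [IsFiniteMeasure μ] (hf : MeasurePreserving f μ μ) (hg : Integrable g μ) {s : Set α}
    (hs : MeasurableSet s) (hfs : f ⁻¹' s = s) {c : ℝ}
    (hc : ∀ x ∈ s, ∃ᶠ n in atTop, birkhoffAverage ℝ f g n x < c) :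
    ∫ x in s, g x ∂μ ≤ c * μ.real s := by
  have hf_s : MeasurePreserving f (μ.restrict s) (μ.restrict s) := by
    simpa only [hfs] using hf.restrict_preimage hs
  have hpos : ∀ᵐ x ∂μ.restrict s, ∃ n, 0 < birkhoffSum f (fun y ↦ c - g y) n x := by
    refine ae_restrict_of_forall_mem hs fun x hx ↦ ?_
    obtain ⟨n, hn, hn0⟩ := ((hc x hx).and_eventually (eventually_gt_atTop 0)).exists
    refine ⟨n, ?_⟩
    rw [birkhoffAverage, smul_eq_mul, inv_mul_lt_iff₀ (by positivity)] at hn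
    simpa [birkhoffSum, Finset.sum_sub_distrib] using hn
  have h_nonneg := hf_s.integral_nonneg_of_ae_exists_birkhoffSum_pos
    (g := fun y ↦ c - g y) ((integrable_const c).sub hg.restrict) hpos
  rw [integral_sub (integrable_const c) hg.restrict, integral_const, smul_eq_mul,
    measureReal_restrict_apply_univ] at h_nonneg
  linarith

theorem MeasureTheory.MeasurePreserving.ae_eq_zero_of_liminf_birkhoffAverage_eq_zero
    [IsFiniteMeasure μ] (hf : MeasurePreserving f μ μ) (hg : Measurable g)
    (hg_nonneg : ∀ x, 0 ≤ g x) (hgC : ∀ x, g x ≤ C) :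
    ∀ᵐ x ∂μ, liminf (fun n ↦ birkhoffAverage ℝ f g n x) atTop = 0 → g x = 0 := by
  have hC : ∀ x, |g x| ≤ C := fun x ↦ abs_le.2 ⟨by linarith [hg_nonneg x, hgC x], hgC x⟩
  set s := {x | liminf (fun n ↦ birkhoffAverage ℝ f g n x) atTop = 0}
  have hs : MeasurableSet s := by
    refine measurableSet_eq_fun (Measurable.liminf fun n ↦ ?_) measurable_const
    have : Measurable (birkhoffSum f g n) :=
      Finset.measurable_sum _ fun k _ ↦ hg.comp (hf.measurable.iterate k)
    exact this.const_smul ((n : ℝ)⁻¹)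
  have hfs : f ⁻¹' s = s := by
    ext x
    simp only [s, mem_preimage, mem_ofPred_eq, liminf_birkhoffAverage_apply hC x]
  have hg_int : Integrable g μ :=
    .of_bound hg.aestronglyMeasurable C (.of_forall fun x ↦ (Real.norm_eq_abs _).trans_le (hC x))
  have h_le : ∀ ε > 0, ∫ x in s, g x ∂μ ≤ ε * μ.real s := fun ε hε ↦
    hf.setIntegral_le_of_frequently_birkhoffAverage_lt hg_int hs hfs fun x hx ↦
      have h_bdd : IsBoundedUnder (· ≤ ·) atTop (birkhoffAverage ℝ f g · x) :=
        isBoundedUnder_of ⟨C, fun n ↦ (abs_le.1 (abs_birkhoffAverage_le hC n x)).2⟩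
      frequently_lt_of_liminf_lt h_bdd.isCoboundedUnder_ge (hx.symm ▸ hε)
  have h_int_zero : ∫ x in s, g x ∂μ = 0 := by
    have h_lim : Tendsto (fun ε : ℝ ↦ ε * μ.real s) (𝓝[>] 0) (𝓝 0) := by
      simpa using ((continuous_mul_const (μ.real s)).tendsto 0).mono_left nhdsWithin_le_nhds
    exact le_antisymm (ge_of_tendsto h_lim (eventually_mem_nhdsWithin.mono h_le))
      (setIntegral_nonneg hs fun x _ ↦ hg_nonneg x)
  exact (ae_restrict_iff' hs).1
    ((integral_eq_zero_iff_of_nonneg (fun x ↦ hg_nonneg x) hg_int.restrict).1 h_int_zero)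

end BirkhoffAverage

lemma MeasureTheory.Measure.prod_diagonal_eq_zero {β : Type*} [MeasurableSpace β]
    [MeasurableEq β] (μ ν : Measure β) [SFinite ν] [NullSingletonClass ν] :
    μ.prod ν (diagonal β) = 0 := by
  rw [Measure.prod_apply measurableSet_diagonal]
  simp [diagonal]

lemma birkhoffAvg_eq_birkhoffAverage {X : Type*} [PseudoMetricSpace X] (T : X → X) (x y : X) :
    birkhoffAvg T x y =
      fun N ↦ birkhoffAverage ℝ (Prod.map T T) (fun z : X × X ↦ dist z.1 z.2) N (x, y) := by
  ext N
  simp [birkhoffAvg, birkhoffAverage, birkhoffSum, Prod.map_iterate, div_eq_inv_mul]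

theorem measure_zero_of_meanProximal_set_general
    {X : Type*} [MetricSpace X] [CompactSpace X] [MeasurableSpace X] [BorelSpace X]
    (T : X → X) (hT : Continuous T)
    (A : Set X)
    (hmp : ∀ x ∈ A, ∀ y ∈ A, MeanProximalPair T x y)
    (μ : Measure X) [IsProbabilityMeasure μ]
    (hinv : ∀ B : Set X, MeasurableSet B → μ (T ⁻¹' B) = μ B)
    (hna : ∀ x : X, μ {x} = 0) :
    μ A = 0 := by
  have hTμ : MeasurePreserving T μ μ :=
    ⟨hT.measurable, Measure.ext fun B hB ↦ by
      rw [Measure.map_apply hT.measurable hB, hinv B hB]⟩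
  have : NullSingletonClass μ := ⟨hna⟩
  have h_offDiag : ∀ᵐ z ∂μ.prod μ, z ∉ diagonal X :=
    measure_eq_zero_iff_ae_notMem.1 (μ.prod_diagonal_eq_zero μ)
  have h_prox := (hTμ.prod hTμ).ae_eq_zero_of_liminf_birkhoffAverage_eq_zero
    continuous_dist.measurable (fun _ ↦ dist_nonneg)
    (fun z ↦ dist_le_diam_of_mem isCompact_univ.isBounded (mem_univ z.1) (mem_univ z.2))
  have hAA : μ.prod μ (A ×ˢ A) = 0 := by
    refine measure_eq_zero_iff_ae_notMem.2 ?_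
    filter_upwards [h_offDiag, h_prox] with z h_ne h_zero ⟨hx, hy⟩
    refine h_ne (dist_eq_zero.1 (h_zero ?_))
    simpa [MeanProximalPair, birkhoffAvg_eq_birkhoffAverage] using hmp _ hx _ hy
  simpa [Measure.prod_prod] using hAA

/-- If `A` is a Borel set such that every pair of points of `A` is mean proximal,
then `A` is null for every non-atomic invariant Borel probability measure. -/
theorem measure_zero_of_meanProximal_set
    {X : Type*} [MetricSpace X] [CompactSpace X] [MeasurableSpace X] [BorelSpace X]
    (T : X → X) (hT : Continuous T)
    (A : Set X) (hA : MeasurableSet A)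
    (hmp : ∀ x ∈ A, ∀ y ∈ A, MeanProximalPair T x y)
    (μ : Measure X) [IsProbabilityMeasure μ]
    (hinv : ∀ B : Set X, MeasurableSet B → μ (T ⁻¹' B) = μ B)
    (hna : ∀ x : X, μ {x} = 0) :
    μ A = 0 :=
  measure_zero_of_meanProximal_set_general T hT A hmp μ hinv hna
end

section
/- Let (X,T) be a TDS which is mean proximal (every pair (x,y) ∈ X × X is mean proximal). Then every (T×T)-invariant Borel probability measure λ on X × X satisfies λ(Δ_X) = 1, where Δ_X is the diagonal {(x,x) : x ∈ X}. -/
open Filter Metric Set MeasureTheory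

/-- If every pair of a TDS is mean proximal, then every `(T×T)`-invariant Borel
probability measure on `X × X` gives full measure to the diagonal. -/
theorem diagonal_full_of_meanProximal
    {X : Type*} [MetricSpace X] [CompactSpace X] [MeasurableSpace X] [BorelSpace X]
    (T : X → X) (hT : Continuous T)
    (hmp : ∀ x y : X, MeanProximalPair T x y)
    (ν : Measure (X × X)) [IsProbabilityMeasure ν]
    (hinv : ∀ B : Set (X × X), MeasurableSet B → ν (Prod.map T T ⁻¹' B) = ν B) :
    ν (Set.diagonal X) = 1 := by
  set S : X × X → X × X := Prod.map T T with hS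
  have hScont : Continuous S := hT.prodMap hT
  have hSmeas : Measurable S := hScont.measurable
  set F : X × X → ℝ := fun z => dist z.1 z.2 with hFdef
  have hFcont : Continuous F := continuous_dist
  set C : ℝ := Metric.diam (Set.univ : Set X) with hCdef
  have hC0 : 0 ≤ C := Metric.diam_nonneg
  have hFC : ∀ z, F z ≤ C := fun z =>
    Metric.dist_le_diam_of_mem isCompact_univ.isBounded (mem_univ _) (mem_univ _)
  have hF0 : ∀ z, 0 ≤ F z := fun z => dist_nonneg
  have hiter : ∀ (k : ℕ) (z : X × X), S^[k] z = (T^[k] z.1, T^[k] z.2) := by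
    intro k z; rw [hS, Prod.map_iterate]; rfl
  have hint : ∀ g : X × X → ℝ, Continuous g → Integrable g ν := fun g hg =>
    hg.integrable_of_hasCompactSupport (isClosed_tsupport g).isCompact
  -- invariance of the measure under iterates
  have hmap : Measure.map S ν = ν := Measure.ext fun B hB => by
    rw [Measure.map_apply hSmeas hB]; exact hinv B hB
  have hmapk : ∀ k : ℕ, Measure.map (S^[k]) ν = ν := by
    intro k; induction k with
    | zero => simp [Measure.map_id]
    | succ k ih =>
      rw [Function.iterate_succ', Function.comp_def]
      have : Measure.map (fun z => S (S^[k] z)) ν = Measure.map S (Measure.map (S^[k]) ν) :=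
        (Measure.map_map hSmeas (hSmeas.iterate k)).symm
      rw [this, ih, hmap]
  have hintegral_comp : ∀ k : ℕ, ∫ z, F (S^[k] z) ∂ν = ∫ z, F z ∂ν := by
    intro k
    have h := MeasureTheory.integral_map (μ := ν) ((hSmeas.iterate k).aemeasurable)
      (f := F) (hFcont.aestronglyMeasurable)
    rw [hmapk k] at h
    exact h.symm
  -- Step A: pointwise good times
  have hA : ∀ ε : ℝ, 0 < ε → ∀ z : X × X, ∃ n : ℕ,
      1 ≤ n ∧ (∑ k ∈ Finset.range n, F (S^[k] z)) < ε * n := by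
    intro ε hε z
    have hmp' := hmp z.1 z.2
    have hub : ∀ n, birkhoffAvg T z.1 z.2 n ≤ C := by
      intro n
      rcases Nat.eq_zero_or_pos n with h0 | h0
      · simp [birkhoffAvg, h0, hC0]
      · have hnpos : (0:ℝ) < n := by exact_mod_cast h0
        rw [birkhoffAvg, div_le_iff₀ hnpos]
        calc (∑ k ∈ Finset.range n, dist (T^[k] z.1) (T^[k] z.2))
            ≤ ∑ k ∈ Finset.range n, C :=
              Finset.sum_le_sum fun k _ => hFC (T^[k] z.1, T^[k] z.2)
          _ = C * n := by rw [Finset.sum_const, Finset.card_range, nsmul_eq_mul]; ring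
    have hb : IsCoboundedUnder (· ≥ ·) atTop (birkhoffAvg T z.1 z.2) :=
      isCoboundedUnder_ge_of_le _ hub
    have hfreq := frequently_lt_of_liminf_lt hb (by rw [hmp']; exact hε)
    obtain ⟨n, hn1, hlt⟩ := (hfreq.and_eventually (eventually_ge_atTop 1)).exists
    refine ⟨n, hlt, ?_⟩
    have hnpos : (0:ℝ) < n := by exact_mod_cast hlt
    have : (∑ k ∈ Finset.range n, dist (T^[k] z.1) (T^[k] z.2)) < ε * n := by
      rw [birkhoffAvg, div_lt_iff₀ hnpos] at hn1
      linarith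
    calc (∑ k ∈ Finset.range n, F (S^[k] z))
        = ∑ k ∈ Finset.range n, dist (T^[k] z.1) (T^[k] z.2) := by
          refine Finset.sum_congr rfl fun k _ => ?_
          rw [hiter k z]
      _ < ε * n := this
  -- Step B: uniform bound on good times via compactness
  have hB : ∀ ε : ℝ, 0 < ε → ∃ Nm : ℕ, ∀ z : X × X, ∃ n : ℕ,
      1 ≤ n ∧ n ≤ Nm ∧ (∑ k ∈ Finset.range n, F (S^[k] z)) < ε * n := by
    intro ε hε
    choose n hn1 hnlt using hA ε hε
    set U : (X × X) → Set (X × X) :=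
      fun z => {w | (∑ k ∈ Finset.range (n z), F (S^[k] w)) < ε * n z} with hU
    have hUopen : ∀ z, IsOpen (U z) := by
      intro z
      have hc : Continuous fun w => ∑ k ∈ Finset.range (n z), F (S^[k] w) :=
        continuous_finset_sum _ fun k _ => hFcont.comp (hScont.iterate k)
      exact isOpen_lt hc continuous_const
    have hcover : (univ : Set (X × X)) ⊆ ⋃ z, U z := fun w _ => mem_iUnion.2 ⟨w, hnlt w⟩
    obtain ⟨t, ht⟩ := isCompact_univ.elim_finite_subcover U hUopen hcover
    refine ⟨t.sup n, fun z => ?_⟩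
    obtain ⟨i, hi, hz⟩ := mem_iUnion₂.1 (ht (mem_univ z))
    exact ⟨n i, hn1 i, Finset.le_sup hi, hz⟩
  -- Step C: greedy block decomposition
  have hkey : ∀ ε : ℝ, 0 < ε → ∀ Nm : ℕ,
      (∀ z : X × X, ∃ n : ℕ, 1 ≤ n ∧ n ≤ Nm ∧ (∑ k ∈ Finset.range n, F (S^[k] z)) < ε * n) →
      ∀ M : ℕ, ∀ z : X × X, (∑ k ∈ Finset.range M, F (S^[k] z)) ≤ ε * M + C * Nm := by
    intro ε hε Nm hcov M
    induction M using Nat.strong_induction_on with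
    | _ M ih =>
      intro z
      obtain ⟨m, hm1, hmN, hlt⟩ := hcov z
      by_cases hc : m ≤ M
      · have hM0 : 0 < M := lt_of_lt_of_le hm1 hc
        have hMm : M - m < M := Nat.sub_lt hM0 hm1
        have hsplit : M = m + (M - m) := (Nat.add_sub_cancel' hc).symm
        have step1 : (∑ k ∈ Finset.range M, F (S^[k] z))
            = (∑ k ∈ Finset.range m, F (S^[k] z))
              + ∑ k ∈ Finset.range (M - m), F (S^[k] (S^[m] z)) := by
          conv_lhs => rw [hsplit]
          rw [Finset.sum_range_add]
          congr 1
          refine Finset.sum_congr rfl fun k _ => ?_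
          rw [add_comm m k, Function.iterate_add_apply]
        rw [step1]
        have h2 := ih (M - m) hMm (S^[m] z)
        have hcast : ((M - m : ℕ) : ℝ) = (M : ℝ) - m := Nat.cast_sub hc
        have := add_le_add hlt.le h2
        rw [hcast] at this
        calc (∑ k ∈ Finset.range m, F (S^[k] z))
              + ∑ k ∈ Finset.range (M - m), F (S^[k] (S^[m] z))
            ≤ ε * m + (ε * ((M : ℝ) - m) + C * Nm) := this
          _ = ε * M + C * Nm := by ring
      · push_neg at hc
        have hMN : (M : ℝ) ≤ (Nm : ℝ) := by
          exact_mod_cast le_of_lt (lt_of_lt_of_le hc hmN)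
        calc (∑ k ∈ Finset.range M, F (S^[k] z))
            ≤ ∑ k ∈ Finset.range M, C := Finset.sum_le_sum fun k _ => hFC _
          _ = C * M := by rw [Finset.sum_const, Finset.card_range, nsmul_eq_mul]; ring
          _ ≤ ε * M + C * Nm := by
            have h1 : (0:ℝ) ≤ ε * M := mul_nonneg hε.le (Nat.cast_nonneg M)
            nlinarith
  -- Step D: integrate
  have hmain : ∀ ε : ℝ, 0 < ε → ∫ z, F z ∂ν ≤ ε := by
    intro ε hε
    obtain ⟨Nm, hNm⟩ := hB ε hε
    have hK := hkey ε hε Nm hNm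
    have hle : ∀ M : ℕ, 1 ≤ M → ∫ z, F z ∂ν ≤ ε + C * Nm / M := by
      intro M hM
      have hMpos : (0:ℝ) < M := by exact_mod_cast hM
      have hMsum : (M : ℝ) * ∫ z, F z ∂ν
          = ∫ z, (∑ k ∈ Finset.range M, F (S^[k] z)) ∂ν := by
        rw [integral_finset_sum _ (fun k _ => hint (fun z => F (S^[k] z)) (hFcont.comp (hScont.iterate k)))]
        simp only [hintegral_comp]
        rw [Finset.sum_const, Finset.card_range, nsmul_eq_mul]
      have hub : ∫ z, (∑ k ∈ Finset.range M, F (S^[k] z)) ∂ν ≤ ε * M + C * Nm := by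
        have h := integral_mono
          (hint _ (continuous_finset_sum _ fun k _ => hFcont.comp (hScont.iterate k)))
          (integrable_const (ε * M + C * Nm)) (fun z => hK M z)
        simpa using h
      have h2 : (M : ℝ) * ∫ z, F z ∂ν ≤ ε * M + C * Nm := by rw [hMsum]; exact hub
      have h3 : ∫ z, F z ∂ν ≤ (ε * M + C * Nm) / M := by
        rw [le_div_iff₀ hMpos]
        calc (∫ z, F z ∂ν) * M = (M : ℝ) * ∫ z, F z ∂ν := by ring
          _ ≤ ε * M + C * Nm := h2
      calc ∫ z, F z ∂ν ≤ (ε * M + C * Nm) / M := h3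
        _ = ε + C * Nm / M := by field_simp
    have htend : Tendsto (fun M : ℕ => ε + C * Nm / M) atTop (nhds ε) := by
      have h0 := tendsto_const_div_atTop_nhds_zero_nat (C * Nm)
      simpa using tendsto_const_nhds.add h0
    exact ge_of_tendsto htend ((eventually_ge_atTop 1).mono fun M hM => hle M hM)
  have hIge : 0 ≤ ∫ z, F z ∂ν := integral_nonneg hF0
  have hIle : ∫ z, F z ∂ν ≤ 0 := by
    have := le_of_forall_pos_le_add (a := ∫ z, F z ∂ν) (b := (0:ℝ))
      (fun ε hε => by simpa using hmain ε hε)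
    exact this
  have hIeq : ∫ z, F z ∂ν = 0 := le_antisymm hIle hIge
  have hae : F =ᵐ[ν] 0 := (integral_eq_zero_iff_of_nonneg hF0 (hint F hFcont)).1 hIeq
  have hdiag_mem : Set.diagonal X ∈ ae ν := by
    filter_upwards [hae] with z hz
    have : dist z.1 z.2 = 0 := hz
    exact dist_eq_zero.1 this
  have hd : MeasurableSet (Set.diagonal X) := isClosed_diagonal.measurableSet
  have hcompl : ν (Set.diagonal X)ᶜ = 0 := mem_ae_iff.1 hdiag_mem
  have := measure_add_measure_compl hd (μ := ν)
  rw [hcompl, add_zero] at this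
  rw [this, measure_univ]
end

section
/- Let (X,T) be a mean proximal TDS (every pair in X × X is mean proximal). Then (X,T) has no mean Li-Yorke pairs: there is no pair (x,y) ∈ X × X with liminf_{N→∞} (1/N) Σ_{k=0}^{N−1} d(T^k x, T^k y) = 0 and limsup_{N→∞} (1/N) Σ_{k=0}^{N−1} d(T^k x, T^k y) > 0. -/
open Filter Metric Set

/-- A mean Li-Yorke pair: a mean proximal pair with positive upper Birkhoff
distance average. -/
def MeanLiYorkePair {X : Type*} [PseudoMetricSpace X] (T : X → X) (x y : X) : Prop :=
  MeanProximalPair T x y ∧ 0 < limsup (birkhoffAvg T x y) atTop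

/-- Tiling lemma: if every tail window of bounded length has small average,
then all long enough averages are small. -/
lemma tiling_avg_le (f : ℕ → ℝ) (hf0 : ∀ k, 0 ≤ f k) (D : ℝ) (hD : ∀ k, f k ≤ D)
    (ε : ℝ) (hε : 0 < ε) (L : ℕ)
    (hwin : ∀ m : ℕ, ∃ M : ℕ, 1 ≤ M ∧ M ≤ L ∧
      ∑ j ∈ Finset.Ico m (m + M), f j ≤ ε * M) :
    ∀ N : ℕ, 1 ≤ N → (∑ k ∈ Finset.range N, f k) / N ≤ ε + (L : ℝ) * D / N := by
  have hD0 : 0 ≤ D := le_trans (hf0 0) (hD 0)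
  choose Mf hMf1 hMfL hMfsum using hwin
  set n : ℕ → ℕ := fun i => Nat.rec 0 (fun _ prev => prev + Mf prev) i with hn
  have hn0 : n 0 = 0 := rfl
  have hnsucc : ∀ i, n (i + 1) = n i + Mf (n i) := fun i => rfl
  have hmono : StrictMono n := strictMono_nat_of_lt_succ (fun i => by
    have := hMf1 (n i); rw [hnsucc]; omega)
  have hS : ∀ i, ∑ k ∈ Finset.range (n i), f k ≤ ε * n i := by
    intro i
    induction i with
    | zero => simp [hn0]
    | succ i ih =>
      have hle : n i ≤ n (i + 1) := (hmono (Nat.lt_succ_self i)).le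
      rw [Finset.range_eq_Ico,
        ← Finset.sum_Ico_consecutive _ (Nat.zero_le (n i)) hle, ← Finset.range_eq_Ico]
      have hblock : ∑ j ∈ Finset.Ico (n i) (n (i + 1)), f j ≤ ε * Mf (n i) := by
        rw [hnsucc]; exact hMfsum (n i)
      calc ∑ k ∈ Finset.range (n i), f k + ∑ j ∈ Finset.Ico (n i) (n (i + 1)), f j
          ≤ ε * n i + ε * Mf (n i) := add_le_add ih hblock
        _ = ε * n (i + 1) := by rw [hnsucc]; push_cast; ring
  intro N hN
  -- find i with n i ≤ N < n (i+1)
  have hP : N < n (N + 1) := lt_of_lt_of_le (Nat.lt_succ_self N) (hmono.le_apply)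
  have hex : ∃ j, N < n j := ⟨N + 1, hP⟩
  classical
  set j := Nat.find hex with hj
  have hjspec : N < n j := Nat.find_spec hex
  have hj1 : 1 ≤ j := by
    rcases Nat.eq_zero_or_pos j with h | h
    · exfalso; rw [h, hn0] at hjspec; omega
    · exact h
  set i := j - 1 with hi
  have hij : j = i + 1 := by omega
  have hni : n i ≤ N := by
    by_contra h
    exact Nat.find_min hex (by omega : i < j) (by omega)
  have hNn : N < n (i + 1) := by rw [← hij]; exact hjspec
  -- bound the sum
  have hsplit : ∑ k ∈ Finset.range N, f k
      = ∑ k ∈ Finset.range (n i), f k + ∑ k ∈ Finset.Ico (n i) N, f k := by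
    rw [Finset.range_eq_Ico, ← Finset.sum_Ico_consecutive _ (Nat.zero_le (n i)) hni,
      ← Finset.range_eq_Ico]
  have htail : ∑ k ∈ Finset.Ico (n i) N, f k ≤ (L : ℝ) * D := by
    calc ∑ k ∈ Finset.Ico (n i) N, f k ≤ ∑ _k ∈ Finset.Ico (n i) N, D :=
          Finset.sum_le_sum (fun k _ => hD k)
      _ = ((N - n i : ℕ) : ℝ) * D := by rw [Finset.sum_const, Nat.card_Ico]; ring
      _ ≤ (L : ℝ) * D := by
          apply mul_le_mul_of_nonneg_right _ hD0
          have : N - n i ≤ L := by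
            have := hnsucc i
            have := hMfL (n i)
            omega
          exact_mod_cast this
  have hsum : ∑ k ∈ Finset.range N, f k ≤ ε * N + (L : ℝ) * D := by
    rw [hsplit]
    have h1 : ∑ k ∈ Finset.range (n i), f k ≤ ε * N := by
      refine le_trans (hS i) ?_
      exact mul_le_mul_of_nonneg_left (by exact_mod_cast hni) hε.le
    linarith
  have hNpos : (0 : ℝ) < N := by exact_mod_cast hN
  rw [div_le_iff₀ hNpos]
  calc ∑ k ∈ Finset.range N, f k ≤ ε * N + (L : ℝ) * D := hsum
    _ = (ε + (L : ℝ) * D / N) * N := by field_simp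

set_option maxHeartbeats 1000000 in
/-- A mean proximal TDS has no mean Li-Yorke pairs. -/
theorem no_meanLiYorke_pair_of_meanProximal
    {X : Type*} [MetricSpace X] [CompactSpace X] (T : X → X) (hT : Continuous T)
    (hmp : ∀ x y : X, MeanProximalPair T x y) :
    ∀ x y : X, ¬ MeanLiYorkePair T x y := by
  intro x y hLY
  obtain ⟨-, hpos⟩ := hLY
  set c := limsup (birkhoffAvg T x y) atTop with hc
  set ε : ℝ := c / 4 with hεdef
  have hε : 0 < ε := by positivity
  set f : ℕ → ℝ := fun k => dist (T^[k] x) (T^[k] y) with hf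
  have hf0 : ∀ k, 0 ≤ f k := fun k => dist_nonneg
  set D : ℝ := diam (univ : Set X) with hDdef
  have hD : ∀ k, f k ≤ D := fun k =>
    dist_le_diam_of_mem isCompact_univ.isBounded (mem_univ _) (mem_univ _)
  have hD0 : 0 ≤ D := le_trans (hf0 0) (hD 0)
  have hnonneg : ∀ (u v : X) (N : ℕ), 0 ≤ birkhoffAvg T u v N := by
    intro u v N
    exact div_nonneg (Finset.sum_nonneg fun k _ => dist_nonneg) (Nat.cast_nonneg N)
  -- continuity of averages
  have cont : ∀ M : ℕ, Continuous (fun p : X × X => birkhoffAvg T p.1 p.2 M) := by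
    intro M
    apply Continuous.div_const
    exact continuous_finset_sum _ fun k _ =>
      (((hT.iterate k).comp continuous_fst).dist ((hT.iterate k).comp continuous_snd))
  -- pointwise small windows
  have pointwise : ∀ p : X × X, ∃ M : ℕ, 1 ≤ M ∧ birkhoffAvg T p.1 p.2 M < ε := by
    intro p
    have h0 : liminf (birkhoffAvg T p.1 p.2) atTop = 0 := hmp p.1 p.2
    have hcb : IsCoboundedUnder (· ≥ ·) atTop (birkhoffAvg T p.1 p.2) :=
      IsCoboundedUnder.of_frequently_le (a := D)
        (Eventually.frequently (Eventually.of_forall (fun N => by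
          rcases Nat.eq_zero_or_pos N with h | h
          · simp [birkhoffAvg, h]; exact hD0
          · have hNpos : (0 : ℝ) < N := by exact_mod_cast h
            rw [birkhoffAvg, div_le_iff₀ hNpos]
            calc ∑ k ∈ Finset.range N, dist (T^[k] p.1) (T^[k] p.2)
                ≤ ∑ _k ∈ Finset.range N, D := Finset.sum_le_sum fun k _ =>
                  dist_le_diam_of_mem isCompact_univ.isBounded (mem_univ _) (mem_univ _)
              _ = N * D := by rw [Finset.sum_const, Finset.card_range]; ring
              _ = D * N := by ring)))
    have hfr : ∃ᶠ N in atTop, birkhoffAvg T p.1 p.2 N < ε :=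
      frequently_lt_of_liminf_lt hcb (by rw [h0]; exact hε)
    obtain ⟨M, hM1, hMlt⟩ := frequently_atTop.mp hfr 1
    exact ⟨M, hM1, hMlt⟩
  choose Mp hMp1 hMplt using pointwise
  -- compactness: uniform bound on window lengths
  set U : X × X → Set (X × X) := fun p => {q | birkhoffAvg T q.1 q.2 (Mp p) < ε} with hU
  have hUopen : ∀ p, IsOpen (U p) := fun p => isOpen_lt (cont (Mp p)) continuous_const
  have hcov : (univ : Set (X × X)) ⊆ ⋃ p : X × X, U p :=
    fun q _ => mem_iUnion.mpr ⟨q, hMplt q⟩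
  obtain ⟨t, ht⟩ := isCompact_univ.elim_finite_subcover U hUopen hcov
  set L : ℕ := t.sup Mp with hL
  have hwin : ∀ m : ℕ, ∃ M : ℕ, 1 ≤ M ∧ M ≤ L ∧
      ∑ j ∈ Finset.Ico m (m + M), f j ≤ ε * M := by
    intro m
    have hq : ((T^[m] x, T^[m] y) : X × X) ∈ ⋃ p ∈ t, U p :=
      ht (mem_univ _)
    obtain ⟨p, hpt, hqp⟩ := mem_iUnion₂.mp hq
    refine ⟨Mp p, hMp1 p, Finset.le_sup hpt, ?_⟩
    have hlt : birkhoffAvg T (T^[m] x) (T^[m] y) (Mp p) < ε := by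
      rw [hU] at hqp; exact hqp
    have hMpos : (0 : ℝ) < (Mp p : ℝ) := by exact_mod_cast hMp1 p
    rw [birkhoffAvg, div_lt_iff₀ hMpos] at hlt
    have heq : ∑ j ∈ Finset.Ico m (m + Mp p), f j
        = ∑ k ∈ Finset.range (Mp p), dist (T^[k] (T^[m] x)) (T^[k] (T^[m] y)) := by
      rw [Finset.sum_Ico_eq_sum_range]
      simp only [Nat.add_sub_cancel_left]
      apply Finset.sum_congr rfl
      intro k _
      simp only [hf]
      rw [add_comm m k, Function.iterate_add_apply, Function.iterate_add_apply]
    rw [heq]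
    linarith
  -- conclude limsup ≤ ε + ε < c
  have hbound := tiling_avg_le f hf0 D hD ε hε L hwin
  have hev : ∀ᶠ N in atTop, birkhoffAvg T x y N ≤ ε + ε := by
    obtain ⟨N0, hN0⟩ := exists_nat_gt ((L : ℝ) * D / ε)
    filter_upwards [eventually_ge_atTop (max 1 (N0 + 1))] with N hN
    have hN1 : 1 ≤ N := le_trans (le_max_left _ _) hN
    have hNR : (0 : ℝ) < N := by exact_mod_cast hN1
    have h1 : birkhoffAvg T x y N ≤ ε + (L : ℝ) * D / N := hbound N hN1
    have h2 : (L : ℝ) * D / N ≤ ε := by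
      rw [div_le_iff₀ hNR]
      have hN0N : ((L : ℝ) * D / ε) < N := by
        calc ((L : ℝ) * D / ε) < N0 := hN0
          _ ≤ N := by exact_mod_cast le_trans (by omega) hN
      calc (L : ℝ) * D = ((L : ℝ) * D / ε) * ε := by field_simp
        _ ≤ N * ε := mul_le_mul_of_nonneg_right hN0N.le hε.le
        _ = ε * N := by ring
    linarith
  have hcb2 : IsCoboundedUnder (· ≤ ·) atTop (birkhoffAvg T x y) :=
    IsCoboundedUnder.of_frequently_ge (a := (0 : ℝ))
      (Eventually.frequently (Eventually.of_forall (fun N => hnonneg x y N)))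
  have : c ≤ ε + ε := limsup_le_of_le hcb2 hev
  rw [hεdef] at this
  linarith
end
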